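/- Let p be an odd prime, n ≥ 1, q = p^n, and let F(x) = x^{q − 2} be the inverse power function over GF(q). Let c ∈ GF(q) with c ∉ {0, 1, 4, 4^{-1}}. If χ(c² − 4c) = −1, χ(1 − 4c) = −1, and χ(c) = −1, then the c-differential spectrum of F is given by ω_0 = (q − 3)/2, ω_1 = 3, ω_2 = (q − 3)/2, and ω_i = 0 for i ≥ 3. -/

import Mathlib

/-!
Off `x ∈ {0, -1}`, the equation `(x + 1)⁻¹ - c x⁻¹ = b` is equivalent to
`b x² + (b + c - 1) x + c = 0`, while `0 ↦ 1` and `-1 ↦ c`. The discriminant `(b - c - 1)² - 4c`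
never vanishes because `c` is a nonsquare, so every `b ∉ {0, 1, c}` has `0` or `2` preimages.
For `b = 1` and `b = c` the discriminants are the nonsquares `c² - 4c` and `1 - 4c`, and `b = 0`
gives a linear equation, so these three values have exactly one preimage each. As the `δ_c(b)`
sum to `q`, we get `ω₁ + 2ω₂ = q = ω₀ + ω₁ + ω₂` with `ω₁ = 3`.
-/

open Finset

/-- `cdelta F d c b` is the number of `x` in the finite field `F` with
`(x+1)^d - c * x^d = b`, i.e. the entry `δ_c(b)` of the `c`-DDT of `x ↦ x^d`. -/
noncomputable def cdelta (F : Type*) [Field F] (d : ℕ) (c b : F) : ℕ :=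
  Nat.card {x : F // (x + 1) ^ d - c * x ^ d = b}

/-- `comega F d c i` is the number of `b` in `F` with `δ_c(b) = i`,
i.e. the value `ω_i` of the `c`-differential spectrum of `x ↦ x^d`. -/
noncomputable def comega (F : Type*) [Field F] (d : ℕ) (c : F) (i : ℕ) : ℕ :=
  Nat.card {b : F // cdelta F d c b = i}

open scoped Classical in
/-- The quadratic character of `F`, valued in `ℤ`. -/
noncomputable def chi (F : Type*) [Field F] (x : F) : ℤ :=
  if x = 0 then 0 else if IsSquare x then 1 else -1

theorem card_filter_eq_zero_add_one_add_two {β : Type*} [Fintype β] (g : β → ℕ)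
    (hg : ∀ b, g b ≤ 2) :
    #{b | g b = 0} + #{b | g b = 1} + #{b | g b = 2} = Fintype.card β := by
  have hg' : ∀ b ∈ (univ : Finset β), g b ∈ range 3 := fun b _ => mem_range.2 (by grind)
  rw [← card_univ, card_eq_sum_card_fiberwise hg']
  simp [sum_range_succ]

theorem sum_eq_card_filter_one_add_two_mul {β : Type*} [Fintype β] (g : β → ℕ)
    (hg : ∀ b, g b ≤ 2) :
    ∑ b, g b = #{b | g b = 1} + 2 * #{b | g b = 2} := by
  have hpoint : ∀ b, g b = (if g b = 1 then 1 else 0) + 2 * (if g b = 2 then 1 else 0) := by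
    intro b; have := hg b; split_ifs <;> omega
  rw [sum_congr rfl fun b _ => hpoint b, sum_add_distrib, ← mul_sum, card_filter, card_filter]

theorem FiniteField.pow_card_sub_two_eq_inv {K : Type*} [Field K] [Fintype K]
    (hK : 2 < Fintype.card K) (x : K) : x ^ (Fintype.card K - 2) = x⁻¹ := by
  rcases eq_or_ne x 0 with rfl | hx
  · rw [zero_pow (by omega), inv_zero]
  · refine eq_inv_of_mul_eq_one_left ?_
    rw [← pow_succ, show Fintype.card K - 2 + 1 = Fintype.card K - 1 by omega,
      FiniteField.pow_card_sub_one_eq_one x hx]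

theorem card_filter_quadratic_eq_zero {K : Type*} [Field K] [Fintype K] [DecidableEq K]
    [NeZero (2 : K)] {a b c : K} (ha : a ≠ 0) (hd : discrim a b c ≠ 0) :
    #{x | a * (x * x) + b * x + c = 0} = if IsSquare (discrim a b c) then 2 else 0 := by
  split_ifs with hsq
  · obtain ⟨s, hs⟩ := hsq
    have hroots : ({x | a * (x * x) + b * x + c = 0} : Finset K)
        = {(-b + s) / (2 * a), (-b - s) / (2 * a)} := by
      ext x; simp [quadratic_eq_zero_iff ha hs]
    have hs0 : s ≠ 0 := by rintro rfl; simp_all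
    rw [hroots, card_pair]
    intro h
    field_simp at h
    have h2s : 2 * s = 0 := by linear_combination h
    exact hs0 ((mul_eq_zero.1 h2s).resolve_left two_ne_zero)
  · rw [card_eq_zero, filter_eq_empty_iff]
    exact fun x _ hx => hsq ⟨_, (discrim_eq_sq_of_quadratic_eq_zero hx).trans (sq _)⟩

theorem not_isSquare_of_chi_eq_neg_one {F : Type*} [Field F] {x : F} (h : chi F x = -1) :
    ¬IsSquare x := by
  unfold chi at h
  split_ifs at h with _ hsq
  exact hsq

theorem comega_eq_card_filter {F : Type*} [Field F] [Fintype F] (d : ℕ) (c : F) (i : ℕ) :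
    comega F d c i = #{b | cdelta F d c b = i} := by
  rw [comega, Nat.card_eq_fintype_card, Fintype.card_subtype]

theorem sum_cdelta {F : Type*} [Field F] [Fintype F] (d : ℕ) (c : F) :
    ∑ b, cdelta F d c b = Fintype.card F := by
  classical
  simp only [cdelta, Nat.card_eq_fintype_card, Fintype.card_subtype]
  exact (card_eq_sum_card_fiberwise fun x _ => mem_univ _).symm

section InverseFunction

variable {F : Type*} [Field F] {c : F}

/-- `Δ_c` of `x ↦ x ^ (q - 2)`; Lean's `0⁻¹ = 0` matches `0 ^ (q - 2) = 0`. -/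
def cDiffInv (c x : F) : F := (x + 1)⁻¹ - c * x⁻¹

theorem cDiffInv_eq_iff (hc : c ≠ 0) (b x : F) :
    cDiffInv c x = b ↔
      (x = 0 ∧ b = 1) ∨ (x = -1 ∧ b = c) ∨ b * (x * x) + (b + c - 1) * x + c = 0 := by
  rw [cDiffInv]
  rcases eq_or_ne x 0 with rfl | hx
  · simp [hc, eq_comm]
  rcases eq_or_ne x (-1) with rfl | hx1
  · have hQ : b * (-1 * -1) + (b + c - 1) * -1 + c = 1 := by ring
    rw [hQ]
    simp [eq_comm]
  have hx1' : x + 1 ≠ 0 := fun h => hx1 (eq_neg_of_add_eq_zero_left h)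
  simp only [hx, hx1, false_and, false_or]
  field_simp
  constructor <;> intro h
  all_goals linear_combination -h

theorem discrim_ne_zero_of_not_isSquare [NeZero (2 : F)] (hc : ¬IsSquare c) (b : F) :
    discrim b (b + c - 1) c ≠ 0 := by
  intro h
  refine hc ⟨(b - c - 1) / 2, ?_⟩
  rw [discrim] at h
  field_simp
  linear_combination -h

variable [Fintype F] [DecidableEq F]

theorem filter_cDiffInv_eq_zero (hc0 : c ≠ 0) (hc1 : c ≠ 1) :
    ({x | cDiffInv c x = 0} : Finset F) = {c / (1 - c)} := by
  have h1c : 1 - c ≠ 0 := sub_ne_zero.2 hc1.symm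
  ext x
  simp only [mem_filter, mem_univ, true_and, mem_singleton,
    cDiffInv_eq_iff hc0, zero_ne_one, hc0.symm, and_false, false_or,
    eq_div_iff h1c]
  constructor <;> intro h
  all_goals linear_combination -h

theorem filter_cDiffInv_eq_one (hc0 : c ≠ 0) (hc1 : c ≠ 1)
    (hsq : ¬IsSquare (c ^ 2 - 4 * c)) :
    ({x | cDiffInv c x = 1} : Finset F) = {0} := by
  have hroot : ∀ x : F, 1 * (x * x) + (1 + c - 1) * x + c ≠ 0 :=
    quadratic_ne_zero_of_discrim_ne_sq fun s hs => hsq ⟨s, by rw [← sq, ← hs, discrim]; ring⟩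
  ext x
  simp only [mem_filter, mem_univ, true_and, mem_singleton, cDiffInv_eq_iff hc0,
    hc1.symm, hroot x, and_true, and_false, or_false]

theorem filter_cDiffInv_eq_self (hc0 : c ≠ 0) (hc1 : c ≠ 1)
    (hsq : ¬IsSquare (1 - 4 * c)) :
    ({x | cDiffInv c x = c} : Finset F) = {-1} := by
  have hroot : ∀ x : F, c * (x * x) + (c + c - 1) * x + c ≠ 0 :=
    quadratic_ne_zero_of_discrim_ne_sq fun s hs => hsq ⟨s, by rw [← sq, ← hs, discrim]; ring⟩
  ext x
  simp only [mem_filter, mem_univ, true_and, mem_singleton, cDiffInv_eq_iff hc0,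
    hc1, hroot x, and_true, and_false, or_false, false_or]

theorem card_filter_cDiffInv_eq_of_mem (hc0 : c ≠ 0) (hc1 : c ≠ 1)
    (h1 : ¬IsSquare (c ^ 2 - 4 * c)) (h2 : ¬IsSquare (1 - 4 * c)) {b : F}
    (hb : b = 0 ∨ b = 1 ∨ b = c) : #{x | cDiffInv c x = b} = 1 := by
  rcases hb with rfl | rfl | rfl
  · rw [filter_cDiffInv_eq_zero hc0 hc1, card_singleton]
  · rw [filter_cDiffInv_eq_one hc0 hc1 h1, card_singleton]
  · rw [filter_cDiffInv_eq_self hc0 hc1 h2, card_singleton]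

variable [NeZero (2 : F)]

theorem card_filter_cDiffInv_eq (hc0 : c ≠ 0)
    (hc : ¬IsSquare c) {b : F} (hb0 : b ≠ 0) (hb1 : b ≠ 1) (hbc : b ≠ c) :
    #{x | cDiffInv c x = b} = if IsSquare (discrim b (b + c - 1) c) then 2 else 0 := by
  simp only [cDiffInv_eq_iff hc0, hb1, hbc, and_false, false_or]
  exact card_filter_quadratic_eq_zero hb0 (discrim_ne_zero_of_not_isSquare hc b)

theorem card_filter_cDiffInv_le_two (hc0 : c ≠ 0) (hc1 : c ≠ 1) (hc : ¬IsSquare c)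
    (h1 : ¬IsSquare (c ^ 2 - 4 * c)) (h2 : ¬IsSquare (1 - 4 * c)) (b : F) :
    #{x | cDiffInv c x = b} ≤ 2 := by
  by_cases hb : b = 0 ∨ b = 1 ∨ b = c
  · rw [card_filter_cDiffInv_eq_of_mem hc0 hc1 h1 h2 hb]
    omega
  push Not at hb
  rw [card_filter_cDiffInv_eq hc0 hc hb.1 hb.2.1 hb.2.2]
  split_ifs <;> omega

theorem card_filter_cDiffInv_eq_one_iff (hc0 : c ≠ 0) (hc1 : c ≠ 1) (hc : ¬IsSquare c)
    (h1 : ¬IsSquare (c ^ 2 - 4 * c)) (h2 : ¬IsSquare (1 - 4 * c)) (b : F) :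
    #{x | cDiffInv c x = b} = 1 ↔ b = 0 ∨ b = 1 ∨ b = c := by
  refine ⟨fun h => ?_, card_filter_cDiffInv_eq_of_mem hc0 hc1 h1 h2⟩
  by_contra hb
  push Not at hb
  rw [card_filter_cDiffInv_eq hc0 hc hb.1 hb.2.1 hb.2.2] at h
  split_ifs at h
  omega

end InverseFunction

theorem cdelta_card_sub_two_eq_card_filter_cDiffInv {F : Type*} [Field F] [Fintype F]
    [DecidableEq F] (hF : 2 < Fintype.card F) (c b : F) :
    cdelta F (Fintype.card F - 2) c b = #{x | cDiffInv c x = b} := by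
  simp only [cdelta, cDiffInv, FiniteField.pow_card_sub_two_eq_inv hF, Nat.card_eq_fintype_card,
    Fintype.card_subtype]
  congr

theorem stmt_5_general (p n : ℕ) (hpodd : Odd p)
    (F : Type*) [Field F] [Fintype F] (hF : Fintype.card F = p ^ n)
    (c : F) (hc0 : c ≠ 0) (hc1 : c ≠ 1)
    (h1 : chi F (c ^ 2 - 4 * c) = -1) (h2 : chi F (1 - 4 * c) = -1) (h3 : chi F c = -1) :
    comega F (p ^ n - 2) c 0 = (p ^ n - 3) / 2 ∧
    comega F (p ^ n - 2) c 1 = 3 ∧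
    comega F (p ^ n - 2) c 2 = (p ^ n - 3) / 2 ∧
    ∀ i, 3 ≤ i → comega F (p ^ n - 2) c i = 0 := by
  classical
  have hodd : Odd (Fintype.card F) := hF ▸ hpodd.pow
  have hq : 2 < Fintype.card F := by
    have := Fintype.one_lt_card (α := F)
    grind
  have : NeZero (2 : F) := ⟨Ring.two_ne_zero fun h => by
    have := FiniteField.even_card_iff_char_two.1 h
    grind⟩
  replace h1 := not_isSquare_of_chi_eq_neg_one h1
  replace h2 := not_isSquare_of_chi_eq_neg_one h2
  replace h3 := not_isSquare_of_chi_eq_neg_one h3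
  have hδ : ∀ b, cdelta F (p ^ n - 2) c b = #{x | cDiffInv c x = b} :=
    hF ▸ cdelta_card_sub_two_eq_card_filter_cDiffInv hq c
  have hle : ∀ b, cdelta F (p ^ n - 2) c b ≤ 2 := fun b =>
    hδ b ▸ card_filter_cDiffInv_le_two hc0 hc1 h3 h1 h2 b
  have hω1 : #{b | cdelta F (p ^ n - 2) c b = 1} = 3 := by
    simp only [hδ, card_filter_cDiffInv_eq_one_iff hc0 hc1 h3 h1 h2]
    exact card_eq_three.2 ⟨0, 1, c, zero_ne_one, hc0.symm, hc1.symm, by ext; simp⟩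
  have hcard := card_filter_eq_zero_add_one_add_two _ hle
  have hsum := sum_eq_card_filter_one_add_two_mul _ hle
  rw [sum_cdelta, hF] at hsum
  rw [hF] at hcard
  simp only [comega_eq_card_filter]
  refine ⟨by omega, hω1, by omega, fun i hi => card_eq_zero.2 (filter_eq_empty_iff.2 ?_)⟩
  exact fun b _ => by have := hle b; omega

theorem stmt_5 (p n : ℕ) (hp : p.Prime) (hpodd : Odd p) (hn : 1 ≤ n)
    (F : Type*) [Field F] [Fintype F] (hF : Fintype.card F = p ^ n)
    (c : F) (hc0 : c ≠ 0) (hc1 : c ≠ 1) (hc4 : c ≠ 4) (hc4i : c ≠ (4 : F)⁻¹)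
    (h1 : chi F (c ^ 2 - 4 * c) = -1) (h2 : chi F (1 - 4 * c) = -1) (h3 : chi F c = -1) :
    comega F (p ^ n - 2) c 0 = (p ^ n - 3) / 2 ∧
    comega F (p ^ n - 2) c 1 = 3 ∧
    comega F (p ^ n - 2) c 2 = (p ^ n - 3) / 2 ∧
    ∀ i, 3 ≤ i → comega F (p ^ n - 2) c i = 0 :=
  stmt_5_general p n hpodd F hF c hc0 hc1 h1 h2 h3
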